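/- If a Gauss diagram G₁ is obtained from G₂ by deleting one chord, then genus(F_{G₁}) ≤ genus(F_{G₂}), where F_G is the closed orientable surface obtained by capping the ribbon surface F'_G with disks. -/

import Mathlib

/-- A Gauss diagram with `n` (signed, oriented) chords: the `2*n` chord endpoints lie on
the core circle in cyclic order `0, 1, …, 2n-1`, and are paired off (each chord giving a
pair of endpoints) by a fixed-point-free involution.  The signs/orientations of chords do
not affect the ribbon surface. -/
structure GaussDiagram where
  n : ℕ
  pairing : Equiv.Perm (Fin (2 * n))
  involutive : ∀ i, pairing (pairing i) = i
  fixfree : ∀ i, pairing i ≠ i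

/-- The number of orbits (cycles, including fixed points) of a permutation of `Fin m`. -/
def numOrbits {m : ℕ} (p : Equiv.Perm (Fin m)) : ℕ :=
  (m - p.cycleType.sum) + p.cycleType.card

/-- The boundary permutation of the ribbon surface `F'_G` (annulus with one orientably
attached band per chord): traversing the boundary, after endpoint `i` one crosses the
band to `pairing i` and proceeds to the next endpoint `pairing i + 1`. -/
def boundaryPerm (G : GaussDiagram) : Equiv.Perm (Fin (2 * G.n)) :=
  G.pairing.trans (finRotate (2 * G.n))

/-- The number `c` of boundary components of the ribbon surface `F'_G`
(for `n = 0`, `F'_G` is the annulus, with two boundary circles). -/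
def ribbonBoundary (G : GaussDiagram) : ℕ :=
  if G.n = 0 then 2 else numOrbits (boundaryPerm G) + 1

/-- Euler characteristic of the ribbon surface `F'_G`: the annulus has `χ = 0` and each
attached band decreases `χ` by one, so `χ(F'_G) = -n`. -/
def ribbonChi (G : GaussDiagram) : ℤ := -(G.n : ℤ)

/-- Euler characteristic of the closed orientable surface `F_G` obtained by capping each
of the `c` boundary circles of `F'_G` with a disk: `χ(F_G) = -n + c`. -/
def chiF (G : GaussDiagram) : ℤ := -(G.n : ℤ) + (ribbonBoundary G : ℤ)

/-- Genus of the closed orientable surface `F_G`, via `χ(F_G) = -n + c = 2 - 2g`. -/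
def genusF (G : GaussDiagram) : ℕ := (G.n + 2 - ribbonBoundary G) / 2

/-- `G₁` is obtained from `G₂` by deleting one chord: there is a (cyclic-)order
preserving embedding of the endpoints of `G₁` into those of `G₂`, commuting with the
pairings, whose image misses exactly the two endpoints of one chord of `G₂`. -/
def IsChordDeletion (G₁ G₂ : GaussDiagram) : Prop :=
  G₂.n = G₁.n + 1 ∧
  ∃ ι : Fin (2 * G₁.n) ↪o Fin (2 * G₂.n),
    (∀ i, G₂.pairing (ι i) = ι (G₁.pairing i)) ∧
    ∃ a : Fin (2 * G₂.n), ∀ i, ι i ≠ a ∧ ι i ≠ G₂.pairing a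

/-!
For `n ≥ 1` the number `c` of boundary circles of `F'_G` is one more than the number of orbits of
`boundaryPerm G`, and `g = (n + 2 - c) / 2`; so it suffices that deleting a chord removes at most
one orbit. Let the deleted chord of `G₂` join `a` and `b`, and `r := boundaryPerm G₂ * swap a b`.
Composing with a transposition changes the number of orbits by at most one. On the other hand `r`
moves `a` and `b` one step along the circle, so walking along `r` from an endpoint of `G₁` reaches
the endpoint that `boundaryPerm G₁` prescribes: `ι` maps each `boundaryPerm G₁`-orbit into one
`r`-orbit, and every `r`-orbit is hit, so `r` has at most as many orbits as `boundaryPerm G₁`.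
-/

open Equiv Finset Function

namespace Equiv.Perm

variable {α β : Type*}

noncomputable def orbitCount (p : Perm α) : ℕ := Nat.card (Quotient (SameCycle.setoid p))

theorem pow_apply_eq_pow_apply_of_forall_lt {σ τ : Perm α} {x : α} {n : ℕ}
    (h : ∀ k < n, σ ((τ ^ k) x) = τ ((τ ^ k) x)) : (σ ^ n) x = (τ ^ n) x := by
  induction n with
  | zero => rfl
  | succ n ih =>
    rw [pow_succ', pow_succ', mul_apply, mul_apply, ih fun k hk => h k (by omega),
      h n n.lt_succ_self]

theorem sameCycle_pow_apply_of_forall_lt {σ τ : Perm α} {x : α} {n : ℕ}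
    (h : ∀ k < n, σ ((τ ^ k) x) = τ ((τ ^ k) x)) : σ.SameCycle x ((τ ^ n) x) :=
  ⟨n, by rw [zpow_natCast, pow_apply_eq_pow_apply_of_forall_lt h]⟩

section Finite

variable [Finite α] [DecidableEq α]

theorem sameCycle_mul_swap_iff {σ : Perm α} {a b x y : α} (ha : ¬σ.SameCycle x a)
    (hb : ¬σ.SameCycle x b) : (σ * swap a b).SameCycle x y ↔ σ.SameCycle x y := by
  have hpow (n : ℕ) : ((σ * swap a b) ^ n) x = (σ ^ n) x :=
    pow_apply_eq_pow_apply_of_forall_lt fun k _ => by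
      rw [mul_apply, swap_apply_of_ne_of_ne (fun h => ha ⟨k, by simpa using h⟩)
        (fun h => hb ⟨k, by simpa using h⟩)]
  constructor <;> intro h <;> obtain ⟨n, rfl⟩ := h.exists_nat_pow_eq <;>
    exact ⟨n, by rw [zpow_natCast, hpow]⟩

theorem orbitCount_mul_swap_le (σ : Perm α) (a b : α) :
    (σ * swap a b).orbitCount ≤ σ.orbitCount + 1 := by
  classical
  set ρ := σ * swap a b
  have hσ : ρ * swap a b = σ := by rw [mul_assoc, swap_mul_self, mul_one]
  let g (x : α) : Quotient (SameCycle.setoid ρ) :=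
    if σ.SameCycle x a ∨ σ.SameCycle x b then ⟦a⟧ else ⟦x⟧
  have hg (x y : α) (hxy : σ.SameCycle x y) : g x = g y := by
    have hcond : (σ.SameCycle x a ∨ σ.SameCycle x b) ↔ (σ.SameCycle y a ∨ σ.SameCycle y b) :=
      or_congr ⟨hxy.symm.trans, hxy.trans⟩ ⟨hxy.symm.trans, hxy.trans⟩
    by_cases hx : σ.SameCycle x a ∨ σ.SameCycle x b
    · simp only [g, if_pos hx, if_pos (hcond.1 hx)]
    · simp only [g, if_neg hx, if_neg (mt hcond.2 hx)]
      rw [not_or] at hx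
      exact Quotient.sound ((sameCycle_mul_swap_iff hx.1 hx.2).2 hxy)
  let F : Quotient (SameCycle.setoid σ) ⊕ Unit → Quotient (SameCycle.setoid ρ) :=
    Sum.elim (Quotient.lift g hg) fun _ => ⟦b⟧
  have hF : Surjective F := by
    rintro ⟨x⟩
    by_cases hxa : ρ.SameCycle x a
    · refine ⟨.inl ⟦a⟧, ?_⟩
      simp only [F, g, Sum.elim_inl, Quotient.lift_mk, SameCycle.refl, true_or, if_true]
      exact Quotient.sound hxa.symm
    by_cases hxb : ρ.SameCycle x b
    · exact ⟨.inr (), Quotient.sound hxb.symm⟩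
    refine ⟨.inl ⟦x⟧, ?_⟩
    have hx : ¬(σ.SameCycle x a ∨ σ.SameCycle x b) := by
      rw [← hσ, sameCycle_mul_swap_iff hxa hxb, sameCycle_mul_swap_iff hxa hxb]
      tauto
    simp only [F, g, Sum.elim_inl, Quotient.lift_mk, if_neg hx]
    rfl
  simpa [orbitCount, Nat.card_sum] using Nat.card_le_card_of_surjective F hF

end Finite

theorem orbitCount_le_of_sameCycle [Finite α] [Finite β] {q : Perm β} {r : Perm α} (f : β → α)
    (hf : ∀ j, r.SameCycle (f j) (f (q j))) (hcover : ∀ x, ∃ j, r.SameCycle x (f j)) :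
    r.orbitCount ≤ q.orbitCount := by
  have hpow (i : β) (n : ℕ) : r.SameCycle (f i) (f ((q ^ n) i)) := by
    induction n with
    | zero => rfl
    | succ n ih => rw [pow_succ', mul_apply]; exact ih.trans (hf _)
  have hmap (i j : β) (hij : q.SameCycle i j) : r.SameCycle (f i) (f j) := by
    obtain ⟨n, rfl⟩ := hij.exists_nat_pow_eq
    exact hpow i n
  let F : Quotient (SameCycle.setoid q) → Quotient (SameCycle.setoid r) := Quotient.map f hmap
  have hF : Surjective F := by
    rintro ⟨x⟩
    obtain ⟨j, hj⟩ := hcover x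
    exact ⟨⟦j⟧, Quotient.sound hj.symm⟩
  exact Nat.card_le_card_of_surjective F hF

section Fintype

variable [Fintype α] [DecidableEq α]

noncomputable def orbitKey (p : Perm α) (x : α) : fixedPoints p ⊕ p.cycleFactorsFinset :=
  if h : p x = x then .inl ⟨x, h⟩
  else .inr ⟨p.cycleOf x, cycleOf_mem_cycleFactorsFinset_iff.2 (mem_support.2 h)⟩

theorem orbitKey_eq_orbitKey_iff {p : Perm α} {x y : α} :
    p.orbitKey x = p.orbitKey y ↔ p.SameCycle x y := by
  by_cases hx : p x = x <;> by_cases hy : p y = y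
  · simp only [orbitKey, hx, hy, dite_true, Sum.inl.injEq, Subtype.ext_iff]
    exact ⟨fun h => h ▸ SameCycle.refl p x, fun h => h.eq_of_left hx⟩
  · simpa [orbitKey, hx, hy] using fun h => hy (h.apply_eq_self_iff.1 hx)
  · simpa [orbitKey, hx, hy] using fun h => hx (h.apply_eq_self_iff.2 hy)
  · simpa [orbitKey, hx, hy] using
      (sameCycle_iff_cycleOf_eq_of_mem_support (mem_support.2 hx) (mem_support.2 hy)).symm

theorem orbitKey_surjective (p : Perm α) : Surjective p.orbitKey := by
  rintro (⟨x, hx⟩ | ⟨c, hc⟩)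
  · exact ⟨x, by simp [orbitKey, show p x = x from hx]⟩
  · obtain ⟨x, hx⟩ := (mem_cycleFactorsFinset_iff.1 hc).1.nonempty_support
    have hpx : p x ≠ x := mem_support.1 (mem_cycleFactorsFinset_support_le hc hx)
    exact ⟨x, by simp [orbitKey, hpx, ← cycle_is_cycleOf hx hc]⟩

theorem orbitCount_eq (p : Perm α) :
    p.orbitCount = Fintype.card α - p.cycleType.sum + Multiset.card p.cycleType := by
  have hkey : Quotient (SameCycle.setoid p) ≃ fixedPoints p ⊕ p.cycleFactorsFinset :=
    (Quotient.congrRight fun _ _ => orbitKey_eq_orbitKey_iff.symm).trans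
      (Setoid.quotientKerEquivOfSurjective _ (orbitKey_surjective p))
  rw [orbitCount, Nat.card_congr hkey, Nat.card_sum,
    Nat.card_eq_fintype_card, card_fixedPoints, Nat.card_eq_finsetCard, cycleType_def,
    Multiset.card_map]
  rfl

end Fintype

theorem numOrbits_eq_orbitCount {m : ℕ} (p : Perm (Fin m)) : numOrbits p = p.orbitCount := by
  rw [orbitCount_eq, Fintype.card_fin]
  rfl

end Equiv.Perm

namespace Fin

theorem finRotate_pow_val_apply {m : ℕ} (k x : Fin m) : (finRotate m ^ (k : ℕ)) x = x + k := by
  rw [← Perm.iterate_eq_pow, ← finCycle_eq_finRotate_iterate, finCycle_apply]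

theorem val_sub_finRotate_pow_apply {m : ℕ} (x : Fin m) {i : ℕ} (hi : i < m) :
    (((finRotate m ^ i) x - x : Fin m) : ℕ) = i := by
  have := x.neZero
  rw [show i = ((⟨i, hi⟩ : Fin m) : ℕ) from rfl, finRotate_pow_val_apply, add_sub_cancel_left]

theorem val_sub_finRotate_self {M : ℕ} (hM : 1 < M) (u : Fin M) :
    ((finRotate M u - u : Fin M) : ℕ) = 1 := by
  have := u.neZero
  rw [finRotate_apply, add_sub_cancel_left, val_one', Nat.mod_eq_of_lt hM]

/-- `((y - x : Fin M) : ℕ)` is how far `y` lies ahead of `x` around the circle; a strictly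
monotone map preserves the order of these distances, i.e. the cyclic order. -/
theorem val_sub_lt_val_sub_of_strictMono {M m : ℕ} {f : Fin M → Fin m} (hf : StrictMono f)
    {x y z : Fin M} (h : ((f y - f x : Fin m) : ℕ) < (f z - f x : Fin m)) :
    ((y - x : Fin M) : ℕ) < (z - x : Fin M) := by
  rcases le_or_gt x y with hxy | hxy <;> rcases le_or_gt x z with hxz | hxz
  · rw [coe_sub_iff_le.2 (hf.monotone hxy), coe_sub_iff_le.2 (hf.monotone hxz)] at h
    rw [coe_sub_iff_le.2 hxy, coe_sub_iff_le.2 hxz]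
    have := hf.lt_iff_lt.1 (lt_def.2 (by omega : (f y : ℕ) < f z))
    rw [lt_def] at this
    omega
  · rw [coe_sub_iff_le.2 hxy, coe_sub_iff_lt.2 hxz]
    omega
  · rw [coe_sub_iff_lt.2 (hf hxy), coe_sub_iff_le.2 (hf.monotone hxz)] at h
    omega
  · rw [coe_sub_iff_lt.2 (hf hxy), coe_sub_iff_lt.2 (hf hxz)] at h
    rw [coe_sub_iff_lt.2 hxy, coe_sub_iff_lt.2 hxz]
    have := hf.lt_iff_lt.1 (lt_def.2 (by omega : (f y : ℕ) < f z))
    rw [lt_def] at this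
    omega

variable {m : ℕ} {r : Perm (Fin m)}

theorem exists_sameCycle_of_eq_finRotate_off_range {β : Type*} [Nonempty β] {f : β → Fin m}
    (hr : ∀ x ∉ Set.range f, r x = finRotate m x) (x : Fin m) : ∃ j, r.SameCycle x (f j) := by
  classical
  obtain ⟨j₀⟩ := ‹Nonempty β›
  have hex : ∃ n, (finRotate m ^ n) x ∈ Set.range f :=
    ⟨(f j₀ - x : Fin m), j₀, by have := x.neZero; rw [finRotate_pow_val_apply, add_sub_cancel]⟩
  obtain ⟨j, hj⟩ := Nat.find_spec hex
  exact ⟨j, hj ▸ Perm.sameCycle_pow_apply_of_forall_lt fun k hk => hr _ (Nat.find_min hex hk)⟩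

theorem sameCycle_finRotate_of_eq_finRotate_off_range {M : ℕ} (hM : 1 < M) {f : Fin M → Fin m}
    (hf : StrictMono f) (hr : ∀ x ∉ Set.range f, r x = finRotate m x) (u : Fin M) :
    r.SameCycle (finRotate m (f u)) (f (finRotate M u)) := by
  have := u.neZero
  have := (f u).neZero
  set D : ℕ := ((f (finRotate M u) - f u : Fin m) : ℕ) with hD_def
  -- A point of the range strictly inside the gap would come from a `w` strictly between `u`
  -- and its successor.
  have hgap (i : ℕ) (hi : 0 < i) (hiD : i < D) : (finRotate m ^ i) (f u) ∉ Set.range f := by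
    rintro ⟨w, hw⟩
    have hpos := val_sub_finRotate_pow_apply (f u) (hiD.trans (Fin.is_lt _))
    rw [← hw] at hpos
    have hwu := val_sub_lt_val_sub_of_strictMono hf (x := u) (y := w) (z := finRotate M u)
      (by omega)
    rw [val_sub_finRotate_self hM, Nat.lt_one_iff, val_eq_zero_iff, sub_eq_zero] at hwu
    rw [hwu, sub_self, val_zero] at hpos
    omega
  have hD : 0 < D := by
    refine Nat.pos_of_ne_zero fun h0 => ?_
    rw [hD_def, val_eq_zero_iff, sub_eq_zero] at h0
    have h1 := val_sub_finRotate_self hM u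
    rw [hf.injective h0, sub_self, val_zero] at h1
    omega
  have := Perm.sameCycle_pow_apply_of_forall_lt (σ := r) (x := finRotate m (f u)) (n := D - 1)
    fun k hk => hr _ <| by
      rw [← Perm.mul_apply, ← pow_succ]
      exact hgap (k + 1) (by omega) (by omega)
  rwa [← Perm.mul_apply, ← pow_succ, Nat.sub_add_cancel hD, finRotate_pow_val_apply,
    add_sub_cancel] at this

end Fin

theorem Function.Injective.eq_or_eq_of_notMem_range {α β : Type*} [Fintype α] [Fintype β]
    {f : β → α} (hf : Injective f) (hcard : Fintype.card α = Fintype.card β + 2) {a b : α}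
    (hab : a ≠ b) (ha : a ∉ Set.range f) (hb : b ∉ Set.range f) {x : α} (hx : x ∉ Set.range f) :
    x = a ∨ x = b := by
  classical
  have huniv : univ.image f ∪ {a, b} = univ := by
    apply eq_univ_of_card
    rw [card_union_of_disjoint, card_image_of_injective _ hf, card_univ, card_pair hab, hcard]
    simp only [disjoint_left, mem_image, mem_univ, true_and, mem_insert, mem_singleton, not_or]
    rintro _ ⟨j, rfl⟩
    exact ⟨fun h => ha ⟨j, h⟩, fun h => hb ⟨j, h⟩⟩
  have hmem := mem_univ x
  rw [← huniv, mem_union, mem_image, mem_insert, mem_singleton] at hmem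
  exact hmem.resolve_left fun ⟨j, _, hj⟩ => hx ⟨j, hj⟩

open Equiv.Perm

theorem GaussDiagram.boundaryPerm_apply (G : GaussDiagram) (i : Fin (2 * G.n)) :
    boundaryPerm G i = finRotate _ (G.pairing i) := rfl

theorem IsChordDeletion.numOrbits_boundaryPerm_le {G₁ G₂ : GaussDiagram}
    (h : IsChordDeletion G₁ G₂) (h0 : 0 < G₁.n) :
    numOrbits (boundaryPerm G₂) ≤ numOrbits (boundaryPerm G₁) + 1 := by
  obtain ⟨hn, ι, hcomm, a, hmiss⟩ := h
  have : Nonempty (Fin (2 * G₁.n)) := ⟨⟨0, by omega⟩⟩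
  set b := G₂.pairing a
  -- `r` traces the boundary after cutting the chord `{a, b}` but keeping its endpoints
  -- on the circle; its first-return map to the range of `ι` is `boundaryPerm G₁`.
  set r := boundaryPerm G₂ * swap a b
  have hr_off : ∀ x ∉ Set.range ι, r x = finRotate _ x := by
    intro x hx
    rcases ι.injective.eq_or_eq_of_notMem_range (by simp only [Fintype.card_fin]; omega)
      (G₂.fixfree a).symm
      (fun ⟨j, hj⟩ => (hmiss j).1 hj) (fun ⟨j, hj⟩ => (hmiss j).2 hj) hx with rfl | rfl
    · simp [r, b, GaussDiagram.boundaryPerm_apply, G₂.involutive]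
    · simp [r, b, GaussDiagram.boundaryPerm_apply]
  have hr_range (j : Fin (2 * G₁.n)) : r (ι j) = finRotate _ (ι (G₁.pairing j)) := by
    rw [Perm.mul_apply, swap_apply_of_ne_of_ne (hmiss j).1 (hmiss j).2,
      GaussDiagram.boundaryPerm_apply, hcomm]
  have hcut : r.orbitCount ≤ (boundaryPerm G₁).orbitCount := by
    refine orbitCount_le_of_sameCycle ι (fun j => ?_)
      (Fin.exists_sameCycle_of_eq_finRotate_off_range hr_off)
    rw [← sameCycle_apply_left, hr_range]
    exact Fin.sameCycle_finRotate_of_eq_finRotate_off_range (by omega) ι.strictMono hr_off _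
  have hswap := orbitCount_mul_swap_le r a b
  rw [mul_assoc, swap_mul_self, mul_one] at hswap
  rw [numOrbits_eq_orbitCount, numOrbits_eq_orbitCount]
  omega

/-- Deleting one chord does not increase the genus of the capped ribbon surface `F_G`. -/
theorem genusF_le_of_chordDeletion (G₁ G₂ : GaussDiagram)
    (h : IsChordDeletion G₁ G₂) :
    genusF G₁ ≤ genusF G₂ := by
  rcases Nat.eq_zero_or_pos G₁.n with h0 | h0
  · simp [genusF, ribbonBoundary, h0]
  have hc := h.numOrbits_boundaryPerm_le h0
  have hn : G₂.n = G₁.n + 1 := h.1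
  simp only [genusF, ribbonBoundary, if_neg h0.ne', if_neg (by omega : G₂.n ≠ 0)]
  omega
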